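/- arXiv:1412.8090 — 4 statements merged into one kernel-verified Lean document; each statement's English description precedes it below -/
import Mathlib

section
/- If a, b ≥ 0 and k ≤ d, then ∑_{i=0}^{d-k} C(d,i) a^{d-i} b^i ≤ C(d,k) a^k (a+b)^{d-k}. -/
/-! Expand `(a + b) ^ (d - k)` by the binomial theorem and compare term by term: the `i`-th term
on the left is `C(d,i) a^(d-i) b^i`, the matching term on the right is `C(d,k) C(d-k,i) a^(d-i) b^i`,
and `C(d,i) ≤ C(d,k) C(d-k,i)` because `C(d,i) C(d-i,k) = C(d,k) C(d-k,i)` (both count the ways to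
choose disjoint subsets of sizes `i` and `k`). -/

namespace Nat

theorem choose_mul_choose_sub_comm (n k i : ℕ) :
    n.choose i * (n - i).choose k = n.choose k * (n - k).choose i := by
  have hi := choose_mul (n := n) (le_add_left i k)
  have hk := choose_mul (n := n) (le_add_right k i)
  rw [Nat.add_sub_cancel] at hi
  rw [Nat.add_sub_cancel_left] at hk
  rw [← hi, ← hk, choose_symm_add]

theorem choose_le_choose_mul_choose_sub {n k i : ℕ} (h : k + i ≤ n) :
    n.choose i ≤ n.choose k * (n - k).choose i :=
  choose_mul_choose_sub_comm n k i ▸ Nat.le_mul_of_pos_right _ (choose_pos (by omega))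

end Nat

theorem binom_sum_bound (d k : ℕ) (hk : k ≤ d) (a b : ℝ) (ha : 0 ≤ a) (hb : 0 ≤ b) :
    ∑ i ∈ Finset.range (d - k + 1), (d.choose i : ℝ) * a ^ (d - i) * b ^ i ≤
      (d.choose k : ℝ) * a ^ k * (a + b) ^ (d - k) := by
  rw [add_comm a b, add_pow, Finset.mul_sum]
  refine Finset.sum_le_sum fun i hi => ?_
  have hki : k + i ≤ d := by rw [Finset.mem_range] at hi; omega
  have hchoose : (d.choose i : ℝ) ≤ d.choose k * (d - k).choose i := by
    exact_mod_cast Nat.choose_le_choose_mul_choose_sub hki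
  calc (d.choose i : ℝ) * a ^ (d - i) * b ^ i
      ≤ d.choose k * (d - k).choose i * a ^ (d - i) * b ^ i := by gcongr
    _ = d.choose k * a ^ k * (b ^ i * a ^ (d - k - i) * (d - k).choose i) := by
      rw [show d - i = k + (d - k - i) by omega, pow_add]
      ring
end

section
/- Let K_1,...,K_m be positive reals and define K_out by tanh(K_out/2) = ∏_{i=1}^m tanh(K_i/2). Then K_out ≤ min_i K_i and K_out ≥ -ln(∑_{i=1}^m e^{-K_i}), the latter provided ∑_{i=1}^m e^{-K_i} < 1. -/
noncomputable def bpg (x : ℝ) : ℝ := (1 - Real.exp (-x)) / (1 + Real.exp (-x))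

lemma bp_tanh_half (x : ℝ) : Real.tanh (x / 2) = bpg x := by
  have e2 : Real.exp (x / 2) * Real.exp (x / 2) = Real.exp x := by
    rw [← Real.exp_add]; ring_nf
  have hne : Real.exp (-x) = 1 / (Real.exp (x/2) * Real.exp (x/2)) := by
    rw [e2, Real.exp_neg]; field_simp
  have hpos : 0 < Real.exp (x/2) := Real.exp_pos _
  rw [Real.tanh_eq_sinh_div_cosh, Real.sinh_eq, Real.cosh_eq, bpg, hne]
  rw [Real.exp_neg]
  field_simp

lemma bpg_strictMono : StrictMono bpg := by
  intro a b hab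
  have ha : 0 < Real.exp (-a) := Real.exp_pos _
  have hb : 0 < Real.exp (-b) := Real.exp_pos _
  have hlt : Real.exp (-b) < Real.exp (-a) := Real.exp_lt_exp.mpr (by linarith)
  rw [bpg, bpg, div_lt_div_iff₀ (by linarith) (by linarith)]
  nlinarith

lemma bp_prod_ge {ι : Type*} (s : Finset ι) (a : ι → ℝ) (h0 : ∀ i ∈ s, 0 ≤ a i)
    (h1 : ∀ i ∈ s, a i ≤ 1) :
    (1 - ∑ i ∈ s, a i) / (1 + ∑ i ∈ s, a i) ≤ ∏ i ∈ s, (1 - a i) / (1 + a i) := by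
  induction s using Finset.cons_induction with
  | empty => simp
  | cons i s hi ih =>
    rw [Finset.prod_cons, Finset.sum_cons]
    have h0' : ∀ j ∈ s, 0 ≤ a j := fun j hj => h0 j (Finset.mem_cons_of_mem hj)
    have h1' : ∀ j ∈ s, a j ≤ 1 := fun j hj => h1 j (Finset.mem_cons_of_mem hj)
    have hai0 : 0 ≤ a i := h0 i (Finset.mem_cons_self i s)
    have hai1 : a i ≤ 1 := h1 i (Finset.mem_cons_self i s)
    have hS0 : 0 ≤ ∑ j ∈ s, a j := Finset.sum_nonneg h0'
    set S := ∑ j ∈ s, a j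
    have hfA : (0 : ℝ) ≤ (1 - a i) / (1 + a i) :=
      div_nonneg (by linarith) (by linarith)
    have step1 : (1 - a i) / (1 + a i) * ((1 - S) / (1 + S)) ≤
        (1 - a i) / (1 + a i) * ∏ j ∈ s, (1 - a j) / (1 + a j) :=
      mul_le_mul_of_nonneg_left (ih h0' h1') hfA
    refine le_trans ?_ step1
    rw [div_mul_div_comm, div_le_div_iff₀ (by linarith) (by positivity)]
    nlinarith [mul_nonneg (mul_nonneg hai0 hS0) (add_nonneg hai0 hS0)]

theorem bp_check_magnitude_bounds (m : ℕ) (hm : 0 < m) (K : Fin m → ℝ) (hK : ∀ i, 0 < K i)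
    (Kout : ℝ) (hdef : Real.tanh (Kout / 2) = ∏ i, Real.tanh (K i / 2)) :
    Kout ≤ Finset.univ.inf' (Finset.univ_nonempty_iff.mpr (Fin.pos_iff_nonempty.mp hm)) K ∧
      ((∑ i, Real.exp (-K i)) < 1 → -Real.log (∑ i, Real.exp (-K i)) ≤ Kout) := by
  have hg : ∀ x, Real.tanh (x / 2) = bpg x := bp_tanh_half
  have hfac0 : ∀ i, (0 : ℝ) ≤ Real.tanh (K i / 2) := by
    intro i
    rw [hg]
    have : Real.exp (-K i) < 1 := Real.exp_lt_one_iff.mpr (by linarith [hK i])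
    have := Real.exp_pos (-K i)
    exact div_nonneg (by linarith) (by linarith)
  have hfac1 : ∀ i, Real.tanh (K i / 2) ≤ 1 := by
    intro i
    rw [hg, bpg]
    have := Real.exp_pos (-K i)
    rw [div_le_one (by linarith)]
    linarith
  constructor
  · obtain ⟨j, _, hj⟩ := Finset.exists_mem_eq_inf' (Finset.univ_nonempty_iff.mpr
      (Fin.pos_iff_nonempty.mp hm)) K
    rw [hj]
    have hsplit : (∏ i, Real.tanh (K i / 2)) =
        Real.tanh (K j / 2) * ∏ i ∈ Finset.univ.erase j, Real.tanh (K i / 2) :=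
      (Finset.mul_prod_erase _ _ (Finset.mem_univ j)).symm
    have hrest : (∏ i ∈ Finset.univ.erase j, Real.tanh (K i / 2)) ≤ 1 :=
      Finset.prod_le_one (fun i _ => hfac0 i) (fun i _ => hfac1 i)
    have hle : Real.tanh (Kout / 2) ≤ Real.tanh (K j / 2) := by
      rw [hdef, hsplit]
      calc Real.tanh (K j / 2) * ∏ i ∈ Finset.univ.erase j, Real.tanh (K i / 2)
          ≤ Real.tanh (K j / 2) * 1 := mul_le_mul_of_nonneg_left hrest (hfac0 j)
        _ = Real.tanh (K j / 2) := mul_one _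
    rw [hg, hg] at hle
    exact bpg_strictMono.le_iff_le.mp hle
  · intro hS
    set S := ∑ i, Real.exp (-K i) with hSdef
    have hSpos : 0 < S := Finset.sum_pos (fun i _ => Real.exp_pos _) ⟨⟨0, hm⟩, Finset.mem_univ _⟩
    have hgL : bpg (-Real.log S) = (1 - S) / (1 + S) := by
      rw [bpg, neg_neg, Real.exp_log hSpos]
    have hprod : (1 - S) / (1 + S) ≤ ∏ i, Real.tanh (K i / 2) := by
      have := bp_prod_ge Finset.univ (fun i => Real.exp (-K i))
        (fun i _ => (Real.exp_pos _).le)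
        (fun i _ => (Real.exp_lt_one_iff.mpr (by linarith [hK i])).le)
      simpa [hg, bpg] using this
    have : bpg (-Real.log S) ≤ bpg Kout := by
      rw [hgL, ← hg, hdef]; exact hprod
    exact bpg_strictMono.le_iff_le.mp this
end

section
/- Let D(p,z) denote the two-point distribution placing mass p at -z and mass 1-p at z, with Battacharyya parameter B(D(p,z)) = p·e^{z/2} + (1-p)·e^{-z/2}. Then for p_1, p_2 ∈ [0,1] and 0 < r ≤ K, writing P = (1 - (1-2p_1)(1-2p_2))/2, we have P·e^{r/2} + (1-P)·e^{-r/2} ≤ (p_1 e^{K} + (1-p_1))·(p_2 e^{r/2} + (1-p_2) e^{-r/2}). -/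
theorem batta_factorization (p₁ p₂ r K : ℝ)
    (hp₁ : p₁ ∈ Set.Icc (0 : ℝ) 1) (hp₂ : p₂ ∈ Set.Icc (0 : ℝ) 1)
    (hr : 0 < r) (hrK : r ≤ K) :
    ((1 - (1 - 2 * p₁) * (1 - 2 * p₂)) / 2) * Real.exp (r / 2) +
        (1 - (1 - (1 - 2 * p₁) * (1 - 2 * p₂)) / 2) * Real.exp (-r / 2) ≤
      (p₁ * Real.exp K + (1 - p₁)) *
        (p₂ * Real.exp (r / 2) + (1 - p₂) * Real.exp (-r / 2)) := by
  obtain ⟨h1, h2⟩ := hp₁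
  obtain ⟨h3, h4⟩ := hp₂
  set A := Real.exp (r / 2) with hA
  set B := Real.exp (-r / 2) with hB
  set E := Real.exp K with hE
  have hAB : A * B = 1 := by
    rw [hA, hB, ← Real.exp_add]; ring_nf; exact Real.exp_zero
  have hApos : 0 < A := Real.exp_pos _
  have hBpos : 0 < B := Real.exp_pos _
  have hA1 : 1 ≤ A := Real.one_le_exp (by linarith)
  have hEA : A ^ 2 ≤ E := by
    rw [hA, hE, ← Real.exp_nat_mul]
    exact Real.exp_le_exp.mpr (by linarith)
  nlinarith [mul_nonneg (mul_nonneg h1 h3) (sub_nonneg.mpr (by nlinarith : B ≤ E * A)),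
    mul_nonneg (mul_nonneg h1 (by linarith : (0:ℝ) ≤ 1 - p₂))
      (sub_nonneg.mpr (by nlinarith : A ≤ E * B))]
end

section
/- Let q_1,...,q_m ∈ [0,1] and z_1,...,z_m > 0, and suppose r > 0 satisfies e^{-r/2} ≤ ∑_{j=1}^m e^{-z_j/2} and r ≤ min_j z_j. Define Q = (1 - ∏_{j=1}^m (1-2q_j))/2. Then Q·e^{r/2} + (1-Q)·e^{-r/2} ≤ ∑_{j=1}^m (q_j e^{z_j/2} + (1-q_j) e^{-z_j/2}). -/
lemma prod_one_sub_two_bound (m : ℕ) (q : Fin m → ℝ)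
    (hq : ∀ j, q j ∈ Set.Icc (0 : ℝ) 1) (s : Finset (Fin m)) :
    |∏ j ∈ s, (1 - 2 * q j)| ≤ 1 ∧
      1 - ∑ j ∈ s, 2 * q j ≤ ∏ j ∈ s, (1 - 2 * q j) := by
  induction s using Finset.induction with
  | empty => simp
  | @insert a s ha ih =>
    obtain ⟨h1, h2⟩ := ih
    obtain ⟨hq0, hq1⟩ := hq a
    have habs : |1 - 2 * q a| ≤ 1 := by
      rw [abs_le]; constructor <;> nlinarith
    rw [Finset.prod_insert ha, Finset.sum_insert ha]
    constructor
    · calc |(1 - 2 * q a) * ∏ j ∈ s, (1 - 2 * q j)|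
          = |1 - 2 * q a| * |∏ j ∈ s, (1 - 2 * q j)| := abs_mul _ _
        _ ≤ 1 * 1 := by
            exact mul_le_mul habs h1 (abs_nonneg _) (by linarith [abs_nonneg (1 - 2 * q a)])
        _ = 1 := by ring
    · have hS : 0 ≤ ∑ j ∈ s, 2 * q j :=
        Finset.sum_nonneg fun j _ => by linarith [(hq j).1]
      rcases le_or_gt 0 (1 - 2 * q a) with h | h
      · nlinarith
      · have := (abs_le.mp h1).2
        nlinarith

theorem batta_sum_bound (m : ℕ) (hm : 0 < m) (q z : Fin m → ℝ)
    (hq : ∀ j, q j ∈ Set.Icc (0 : ℝ) 1) (hz : ∀ j, 0 < z j)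
    (r : ℝ) (hr : 0 < r) (hrz : ∀ j, r ≤ z j)
    (hsum : Real.exp (-r / 2) ≤ ∑ j, Real.exp (-z j / 2)) :
    ((1 - ∏ j, (1 - 2 * q j)) / 2) * Real.exp (r / 2) +
        (1 - (1 - ∏ j, (1 - 2 * q j)) / 2) * Real.exp (-r / 2) ≤
      ∑ j, (q j * Real.exp (z j / 2) + (1 - q j) * Real.exp (-z j / 2)) := by
  obtain ⟨h1, h2⟩ := prod_one_sub_two_bound m q hq Finset.univ
  set P := ∏ j, (1 - 2 * q j) with hP
  set Q := (1 - P) / 2 with hQ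
  have hQ0 : 0 ≤ Q := by
    have := (abs_le.mp h1).2
    rw [hQ]; linarith
  have hQle : Q ≤ ∑ j, q j := by
    have : ∑ j : Fin m, 2 * q j = 2 * ∑ j, q j := by
      rw [Finset.mul_sum]
    rw [hQ]; linarith [h2, this ▸ h2]
  have hsinh : 0 ≤ Real.exp (r / 2) - Real.exp (-r / 2) := by
    have : Real.exp (-r / 2) ≤ Real.exp (r / 2) :=
      Real.exp_le_exp.mpr (by linarith)
    linarith
  have key : Q * (Real.exp (r / 2) - Real.exp (-r / 2)) ≤
      ∑ j, q j * (Real.exp (z j / 2) - Real.exp (-z j / 2)) := by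
    calc Q * (Real.exp (r / 2) - Real.exp (-r / 2))
        ≤ (∑ j, q j) * (Real.exp (r / 2) - Real.exp (-r / 2)) :=
          mul_le_mul_of_nonneg_right hQle hsinh
      _ = ∑ j, q j * (Real.exp (r / 2) - Real.exp (-r / 2)) := by
          rw [Finset.sum_mul]
      _ ≤ ∑ j, q j * (Real.exp (z j / 2) - Real.exp (-z j / 2)) := by
          apply Finset.sum_le_sum
          intro j _
          apply mul_le_mul_of_nonneg_left _ (hq j).1
          have ha : Real.exp (r / 2) ≤ Real.exp (z j / 2) :=
            Real.exp_le_exp.mpr (by linarith [hrz j])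
          have hb : Real.exp (-z j / 2) ≤ Real.exp (-r / 2) :=
            Real.exp_le_exp.mpr (by linarith [hrz j])
          linarith
  have expand : ∑ j, (q j * Real.exp (z j / 2) + (1 - q j) * Real.exp (-z j / 2))
      = (∑ j, q j * (Real.exp (z j / 2) - Real.exp (-z j / 2)))
        + ∑ j, Real.exp (-z j / 2) := by
    rw [← Finset.sum_add_distrib]
    congr 1; ext j; ring
  rw [expand]
  have lhs_eq : Q * Real.exp (r / 2) + (1 - Q) * Real.exp (-r / 2)
      = Q * (Real.exp (r / 2) - Real.exp (-r / 2)) + Real.exp (-r / 2) := by ring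
  calc Q * Real.exp (r / 2) + (1 - Q) * Real.exp (-r / 2)
      = Q * (Real.exp (r / 2) - Real.exp (-r / 2)) + Real.exp (-r / 2) := lhs_eq
    _ ≤ _ := add_le_add key hsum
end
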